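/- arXiv:1308.1683 — 2 statements merged into one kernel-verified Lean document; each statement's English description precedes it below -/
import Mathlib

section
/- Let l, β, ζ, σ ∈ ℝ, set ω = (1+l²)/8 and τ(u) = ω·u⁻² for u > 0. Then the function a(u) = u·(β + ζ·cos(l·ln u) + σ·sin(l·ln u)) satisfies a'''(u) + 8τ(u)·a'(u) + 4τ'(u)·a(u) = 0 for all u > 0. -/
/-- Left-hand side of the third-order ODE a''' + 8τ a' + 4τ' a = 0 governing
the u-dependence of conformal Killing vectors of type N pp-wave spacetimes. -/
noncomputable def odeLHS (τ a : ℝ → ℝ) (u : ℝ) : ℝ :=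
  deriv (deriv (deriv a)) u + 8 * τ u * deriv a u + 4 * deriv τ u * a u

private lemma hd_cos (l : ℝ) {u : ℝ} (hu : 0 < u) :
    HasDerivAt (fun x => Real.cos (l * Real.log x))
      (-Real.sin (l * Real.log u) * (l * u⁻¹)) u :=
  (Real.hasDerivAt_cos _).comp u ((Real.hasDerivAt_log hu.ne').const_mul l)

private lemma hd_sin (l : ℝ) {u : ℝ} (hu : 0 < u) :
    HasDerivAt (fun x => Real.sin (l * Real.log x))
      (Real.cos (l * Real.log u) * (l * u⁻¹)) u :=
  (Real.hasDerivAt_sin _).comp u ((Real.hasDerivAt_log hu.ne').const_mul l)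

private lemma hd1 (l β ζ σ : ℝ) {u : ℝ} (hu : 0 < u) :
    HasDerivAt (fun u => u * (β + ζ * Real.cos (l * Real.log u) + σ * Real.sin (l * Real.log u)))
      (β + (ζ + l*σ) * Real.cos (l * Real.log u) + (σ - l*ζ) * Real.sin (l * Real.log u)) u := by
  have h := (hasDerivAt_id u).mul
    (((hd_cos l hu).const_mul ζ).const_add β |>.add ((hd_sin l hu).const_mul σ))
  refine h.congr_deriv ?_
  simp only [Pi.add_apply, id]
  field_simp
  ring

private lemma hd2 (l β ζ σ : ℝ) {u : ℝ} (hu : 0 < u) :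
    HasDerivAt (fun u => β + (ζ + l*σ) * Real.cos (l * Real.log u)
        + (σ - l*ζ) * Real.sin (l * Real.log u))
      ((l/u) * ((σ - l*ζ) * Real.cos (l * Real.log u) - (ζ + l*σ) * Real.sin (l * Real.log u))) u := by
  have h := (((hd_cos l hu).const_mul (ζ + l*σ)).const_add β).add
    ((hd_sin l hu).const_mul (σ - l*ζ))
  refine h.congr_deriv ?_
  field_simp
  ring

private lemma hd3 (l β ζ σ : ℝ) {u : ℝ} (hu : 0 < u) :
    HasDerivAt (fun u => (l/u) * ((σ - l*ζ) * Real.cos (l * Real.log u)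
        - (ζ + l*σ) * Real.sin (l * Real.log u)))
      ((-l/u^2) * ((σ - l*ζ) * Real.cos (l * Real.log u) - (ζ + l*σ) * Real.sin (l * Real.log u))
       + (l/u) * ((-(σ - l*ζ) * Real.sin (l * Real.log u)
          - (ζ + l*σ) * Real.cos (l * Real.log u)) * (l * u⁻¹))) u := by
  have hlu : HasDerivAt (fun u : ℝ => l / u) (-l/u^2) u := by
    have := ((hasDerivAt_id u).inv hu.ne').const_mul l
    refine this.congr_deriv ?_
    simp only [id]
    field_simp
  have hg := ((hd_cos l hu).const_mul (σ - l*ζ)).sub ((hd_sin l hu).const_mul (ζ + l*σ))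
  have h := hlu.mul hg
  refine h.congr_deriv ?_
  simp only [Pi.sub_apply]
  ring

private lemma hdtau (l : ℝ) {u : ℝ} (hu : 0 < u) :
    HasDerivAt (fun u : ℝ => ((1 + l ^ 2) / 8) / u ^ 2) (-2 * ((1 + l^2)/8) / u^3) u := by
  have := ((hasDerivAt_pow 2 u).inv (pow_ne_zero 2 hu.ne')).const_mul ((1 + l ^ 2) / 8)
  refine this.congr_deriv ?_
  field_simp
  ring

/-- with τ(u) = ((1+l²)/8)·u⁻², the function
a(u) = u(β + ζ·cos(l ln u) + σ·sin(l ln u)) solves a''' + 8τa' + 4τ'a = 0 for u > 0. -/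
theorem ode_solution_case_c (l β ζ σ : ℝ) :
    ∀ u : ℝ, 0 < u →
      odeLHS (fun u => ((1 + l ^ 2) / 8) / u ^ 2)
        (fun u => u * (β + ζ * Real.cos (l * Real.log u) + σ * Real.sin (l * Real.log u))) u
        = 0 := by
  intro u hu
  set a0 : ℝ → ℝ := fun u => u * (β + ζ * Real.cos (l * Real.log u) + σ * Real.sin (l * Real.log u))
  set a1 : ℝ → ℝ := fun u => β + (ζ + l*σ) * Real.cos (l * Real.log u)
      + (σ - l*ζ) * Real.sin (l * Real.log u)
  set a2 : ℝ → ℝ := fun u => (l/u) * ((σ - l*ζ) * Real.cos (l * Real.log u)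
      - (ζ + l*σ) * Real.sin (l * Real.log u))
  have mem : Set.Ioi (0:ℝ) ∈ nhds u := isOpen_Ioi.mem_nhds hu
  have e1 : deriv a0 =ᶠ[nhds u] a1 :=
    Filter.eventuallyEq_of_mem mem (fun x hx => (hd1 l β ζ σ hx).deriv)
  have e2 : deriv a1 =ᶠ[nhds u] a2 :=
    Filter.eventuallyEq_of_mem mem (fun x hx => (hd2 l β ζ σ hx).deriv)
  have d1 : deriv a0 u = a1 u := (hd1 l β ζ σ hu).deriv
  have d2 : deriv (deriv a0) u = a2 u := by
    rw [e1.deriv_eq]; exact (hd2 l β ζ σ hu).deriv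
  have d3 : deriv (deriv (deriv a0)) u =
      (-l/u^2) * ((σ - l*ζ) * Real.cos (l * Real.log u) - (ζ + l*σ) * Real.sin (l * Real.log u))
       + (l/u) * ((-(σ - l*ζ) * Real.sin (l * Real.log u)
          - (ζ + l*σ) * Real.cos (l * Real.log u)) * (l * u⁻¹)) := by
    rw [(e1.deriv.trans e2).deriv_eq]
    exact (hd3 l β ζ σ hu).deriv
  have dt : deriv (fun u : ℝ => ((1 + l ^ 2) / 8) / u ^ 2) u = -2 * ((1 + l^2)/8) / u^3 :=
    (hdtau l hu).deriv
  simp only [odeLHS, d1, d3, dt, a0, a1]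
  field_simp
  ring
end

section
/- Let η, σ ∈ ℝ and let W : ℝ → ℝ be smooth, and let H(u,y,z) = W(ηz − σy). Then the four vector fields on ℝ⁴ given by k = ∂_v, X₂ = ∂_u, X₃ = η∂_y + σ∂_z, and X₄ = (ηy + σz)∂_v + u·(η∂_y + σ∂_z) are all Killing vectors of the pp-wave metric g_H, i.e. each satisfies ℒ_X g_H = 0. -/
/-- Partial derivative ∂_c f at p on ℝ⁴ (coordinates (u,v,y,z) = indices 0,1,2,3). -/
noncomputable def pd (f : (Fin 4 → ℝ) → ℝ) (c : Fin 4) (p : Fin 4 → ℝ) : ℝ :=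
  fderiv ℝ f p (Pi.single c 1)

/-- Lie derivative of a bilinear-form-valued map g along the vector field Y:
(ℒ_Y g)_{ij} = Σ_c Y^c ∂_c g_{ij} + Σ_c g_{cj} ∂_i Y^c + Σ_c g_{ic} ∂_j Y^c. -/
noncomputable def lieDeriv (Y : (Fin 4 → ℝ) → (Fin 4 → ℝ))
    (g : (Fin 4 → ℝ) → Fin 4 → Fin 4 → ℝ) (p : Fin 4 → ℝ) (i j : Fin 4) : ℝ :=
  (∑ c, Y p c * pd (fun q => g q i j) c p)
  + (∑ c, g p c j * pd (fun q => Y q c) i p)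
  + (∑ c, g p i c * pd (fun q => Y q c) j p)

/-- The pp-wave metric with metric function H(u,y,z):
ds² = −2 du dv − 2H du² + dy² + dz². -/
noncomputable def ppMetric (H : (Fin 3 → ℝ) → ℝ) (p : Fin 4 → ℝ) : Fin 4 → Fin 4 → ℝ :=
  fun i j =>
    if i = 0 ∧ j = 0 then -2 * H ![p 0, p 2, p 3]
    else if (i = 0 ∧ j = 1) ∨ (i = 1 ∧ j = 0) then -1
    else if (i = 2 ∧ j = 2) ∨ (i = 3 ∧ j = 3) then 1
    else 0


lemma pd_const (a : ℝ) (c : Fin 4) (p : Fin 4 → ℝ) :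
    pd (fun _ => a) c p = 0 := by simp [pd]

lemma pd_lin (a b : ℝ) (m n c : Fin 4) (p : Fin 4 → ℝ) :
    pd (fun q => a * q m + b * q n) c p
      = a * (Pi.single c 1 : Fin 4 → ℝ) m + b * (Pi.single c 1 : Fin 4 → ℝ) n := by
  have h : (fun q : Fin 4 → ℝ => a * q m + b * q n)
      = ⇑(a • (ContinuousLinearMap.proj m : (Fin 4 → ℝ) →L[ℝ] ℝ)
        + b • (ContinuousLinearMap.proj n : (Fin 4 → ℝ) →L[ℝ] ℝ)) := by
    ext q; simp [smul_eq_mul]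
  rw [pd, h, ContinuousLinearMap.fderiv]; simp [smul_eq_mul]

lemma pd_smul (a : ℝ) (m c : Fin 4) (p : Fin 4 → ℝ) :
    pd (fun q => q m * a) c p = (Pi.single c 1 : Fin 4 → ℝ) m * a := by
  have h : (fun q : Fin 4 → ℝ => q m * a)
      = ⇑(a • (ContinuousLinearMap.proj m : (Fin 4 → ℝ) →L[ℝ] ℝ)) := by
    ext q; simp [smul_eq_mul, mul_comm]
  rw [pd, h, ContinuousLinearMap.fderiv]; simp [smul_eq_mul, mul_comm]

lemma pd_H (W : ℝ → ℝ) (hW : ContDiff ℝ (⊤ : ℕ∞) W) (η σ : ℝ) (c : Fin 4) (p : Fin 4 → ℝ) :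
    pd (fun q => -2 * W (η * q 3 - σ * q 2)) c p
      = -2 * (deriv W (η * p 3 - σ * p 2)
          * (η * (Pi.single c 1 : Fin 4 → ℝ) 3 - σ * (Pi.single c 1 : Fin 4 → ℝ) 2)) := by
  set L := (η • (ContinuousLinearMap.proj 3 : (Fin 4 → ℝ) →L[ℝ] ℝ)
      - σ • (ContinuousLinearMap.proj 2 : (Fin 4 → ℝ) →L[ℝ] ℝ)) with hLdef
  have hL : ∀ q : Fin 4 → ℝ, L q = η * q 3 - σ * q 2 := by
    intro q; simp [hLdef, smul_eq_mul]
  have hW' : HasDerivAt W (deriv W (L p)) (L p) :=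
    ((hW.differentiable (by simp)) (L p)).hasDerivAt
  have h1 : HasFDerivAt (fun q => W (L q)) ((deriv W (L p)) • L) p :=
    hW'.comp_hasFDerivAt p L.hasFDerivAt
  have h2 : HasFDerivAt (fun q => -2 * W (L q)) ((-2 : ℝ) • ((deriv W (L p)) • L)) p :=
    h1.const_smul (-2 : ℝ)
  have h3 : (fun q : Fin 4 → ℝ => -2 * W (η * q 3 - σ * q 2))
      = fun q => -2 * W (L q) := by
    funext q; rw [hL]
  rw [pd, h3, h2.fderiv]
  simp [hL, smul_eq_mul]


lemma pd_H_a (W : ℝ → ℝ) (hW : ContDiff ℝ (⊤ : ℕ∞) W) (η σ : ℝ) (c : Fin 4) (p : Fin 4 → ℝ) :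
    pd (fun q => -(W (η * q 3 - σ * q 2) * 2)) c p
      = -2 * (deriv W (η * p 3 - σ * p 2)
          * (η * (Pi.single c 1 : Fin 4 → ℝ) 3 - σ * (Pi.single c 1 : Fin 4 → ℝ) 2)) := by
  have e : (fun q : Fin 4 → ℝ => -(W (η * q 3 - σ * q 2) * 2))
      = fun q => -2 * W (η * q 3 - σ * q 2) := by funext q; ring
  rw [e, pd_H W hW]

lemma pd_H_b (W : ℝ → ℝ) (hW : ContDiff ℝ (⊤ : ℕ∞) W) (η σ : ℝ) (c : Fin 4) (p : Fin 4 → ℝ) :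
    pd (fun q => -(2 * W (η * q 3 - σ * q 2))) c p
      = -2 * (deriv W (η * p 3 - σ * p 2)
          * (η * (Pi.single c 1 : Fin 4 → ℝ) 3 - σ * (Pi.single c 1 : Fin 4 → ℝ) 2)) := by
  have e : (fun q : Fin 4 → ℝ => -(2 * W (η * q 3 - σ * q 2)))
      = fun q => -2 * W (η * q 3 - σ * q 2) := by funext q; ring
  rw [e, pd_H W hW]

/-- for H = W(ηz − σy), the vector fields k = ∂_v, X₂ = ∂_u,
X₃ = η∂_y + σ∂_z, X₄ = (ηy+σz)∂_v + u(η∂_y+σ∂_z) are Killing vectors of g_H. -/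
theorem killing_vectors_class8_eps0
    (η σ : ℝ) (W : ℝ → ℝ) (hW : ContDiff ℝ (⊤ : ℕ∞) W)
    (H : (Fin 3 → ℝ) → ℝ) (hH : H = fun q => W (η * q 2 - σ * q 1))
    (k X₂ X₃ X₄ : (Fin 4 → ℝ) → (Fin 4 → ℝ))
    (hk : k = fun _ => ![0, 1, 0, 0])
    (hX₂ : X₂ = fun _ => ![1, 0, 0, 0])
    (hX₃ : X₃ = fun _ => ![0, 0, η, σ])
    (hX₄ : X₄ = fun p => ![0, η * p 2 + σ * p 3, p 0 * η, p 0 * σ]) :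
    (∀ p i j, lieDeriv k (ppMetric H) p i j = 0) ∧
    (∀ p i j, lieDeriv X₂ (ppMetric H) p i j = 0) ∧
    (∀ p i j, lieDeriv X₃ (ppMetric H) p i j = 0) ∧
    (∀ p i j, lieDeriv X₄ (ppMetric H) p i j = 0) := by
  subst hH hk hX₂ hX₃ hX₄
  refine ⟨?_, ?_, ?_, ?_⟩ <;> intro p i j <;> fin_cases i <;> fin_cases j <;>
    simp [lieDeriv, ppMetric, Fin.sum_univ_four, pd_const, pd_lin, pd_smul,
      pd_H W hW, pd_H_a W hW, pd_H_b W hW, Pi.single_apply] <;> try ring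
end
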